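/- arXiv:1812.08100 — 4 statements merged into one kernel-verified Lean document; each statement's English description precedes it below -/
import Mathlib

section
/- Let Ω be a compact subset of ℝ^d with a probability measure μ, and let W be a class of real-valued continuous functions on Ω with ‖f‖_∞ ≤ M for all f ∈ W, such that the entropy numbers in the uniform norm satisfy ε_n(W) ≤ C₁ n^{−r} for all n, where r ∈ (0,1/2). Then there exists a constant K such that for every m ∈ ℕ there is a set of points ξ = {ξ^1,…,ξ^m} ⊂ Ω with |‖f‖_{L_2(μ)}² − (1/m)∑_{j=1}^m f(ξ^j)²| ≤ K m^{−r} for all f ∈ W; in particular er_m(W,L_2) ≤ K m^{−r}. -/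
/-!
Chaining. The entropy bound provides nets `N k` of `W` with at most `2 ^ 2 ^ k` elements and
uniform accuracy `ε k ≍ 2 ^ (-k r)`, starting from `N 0 = {0}`. For i.i.d. points
`ξ ~ μ ^ m`, Hoeffding's inequality and a union bound over the close pairs
`(g, h) ∈ N (k + 1) × N k` show that with positive probability every increment `g² - h²`
has discretization error at most `8 M (ε (k + 1) + ε k) √(2 ^ k / m)`. For `f ∈ W`, telescoping
along its approximants `0 = q 0, q 1, …, q L`, `L = ⌊log₂ m⌋`, adds these up to a geometric
series dominated by its last term `≍ m ^ (-r)`, because `r < 1 / 2`; the remaining error of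
`f² - (q L)²` is `O(ε L) = O(m ^ (-r))`.
-/

open MeasureTheory

/-- The entropy numbers of a class `W` of functions in the uniform norm:
`ε_n(W) = inf{ε > 0 : ∃ f₁,…,f_{2ⁿ} ∈ W covering W by balls of radius ε in ‖·‖_∞}`. -/
noncomputable def entropyNum {Ω : Type*} (W : Set (Ω → ℝ)) (n : ℕ) : ℝ :=
  sInf {ε : ℝ | 0 < ε ∧ ∃ g : Fin (2 ^ n) → (Ω → ℝ), (∀ i, g i ∈ W) ∧
    ∀ f ∈ W, ∃ i, ∀ x, |f x - g i x| ≤ ε}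

open ProbabilityTheory Real Finset

section Nets

variable {β : Type*}

def IsUniformNet (W : Set (β → ℝ)) (N : Finset (β → ℝ)) (ε : ℝ) : Prop :=
  ∀ f ∈ W, ∃ g ∈ N, ∀ x, |f x - g x| ≤ ε

theorem entropyNum_nonneg (W : Set (β → ℝ)) (n : ℕ) : 0 ≤ entropyNum W n :=
  Real.sInf_nonneg fun _ hε => hε.1.le

theorem exists_isUniformNet_of_entropyNum_lt {W : Set (β → ℝ)} {M δ : ℝ} {n : ℕ}
    (hWM : ∀ f ∈ W, ∀ x, |f x| ≤ M) (h : entropyNum W n < δ) :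
    ∃ N : Finset (β → ℝ), #N ≤ 2 ^ n ∧ ↑N ⊆ W ∧ IsUniformNet W N δ := by
  classical
  rcases W.eq_empty_or_nonempty with rfl | ⟨f₀, hf₀⟩
  · exact ⟨∅, by simp, by simp, fun f hf => hf.elim⟩
  -- without this the infimum would be the junk value `sInf ∅ = 0`
  have hne : {ε : ℝ | 0 < ε ∧ ∃ g : Fin (2 ^ n) → (β → ℝ), (∀ i, g i ∈ W) ∧
      ∀ f ∈ W, ∃ i, ∀ x, |f x - g i x| ≤ ε}.Nonempty := by
    refine ⟨|2 * M| + 1, by positivity, fun _ => f₀, fun _ => hf₀, fun f hf => ⟨0, fun x => ?_⟩⟩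
    linarith [abs_sub (f x) (f₀ x), hWM f hf x, hWM f₀ hf₀ x, le_abs_self (2 * M)]
  obtain ⟨ε, ⟨-, g, hgW, hcover⟩, hεδ⟩ := exists_lt_of_csInf_lt hne h
  refine ⟨univ.image g, card_image_le.trans (by simp), by simpa [Set.subset_def] using hgW,
    fun f hf => ?_⟩
  obtain ⟨i, hi⟩ := hcover f hf
  exact ⟨g i, mem_image_of_mem g (mem_univ i), fun x => (hi x).trans hεδ.le⟩

theorem exists_nets_of_entropyNum_le {W : Set (β → ℝ)} {M C₁ r : ℝ} (hM : 0 < M) (hr : r ≤ 1)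
    (hWM : ∀ f ∈ W, ∀ x, |f x| ≤ M)
    (hent : ∀ n : ℕ, 1 ≤ n → entropyNum W n ≤ C₁ * (n : ℝ) ^ (-r)) :
    ∃ N : ℕ → Finset (β → ℝ), N 0 = {0} ∧ (∀ k, #(N k) ≤ 2 ^ 2 ^ k) ∧
      (∀ k, ↑(N k) ⊆ insert 0 W) ∧
      ∀ k, IsUniformNet W (N k) (2 * (C₁ + M) * ((2 : ℝ) ^ k) ^ (-r)) := by
  have hC₁ : 0 ≤ C₁ := by simpa using (entropyNum_nonneg W 1).trans (hent 1 le_rfl)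
  have hent_lt : ∀ k, entropyNum W (2 ^ k) < 2 * (C₁ + M) * ((2 : ℝ) ^ (k + 1)) ^ (-r) := by
    intro k
    have h2r : 1 / 2 ≤ (2 : ℝ) ^ (-r) := by
      rw [rpow_neg zero_le_two, one_div]
      gcongr
      simpa using rpow_le_rpow_of_exponent_le one_le_two hr
    calc entropyNum W (2 ^ k) ≤ C₁ * ((2 : ℝ) ^ k) ^ (-r) := by
          exact_mod_cast hent _ Nat.one_le_two_pow
      _ < 2 * (C₁ + M) * (1 / 2) * ((2 : ℝ) ^ k) ^ (-r) := by gcongr; linarith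
      _ ≤ 2 * (C₁ + M) * 2 ^ (-r) * ((2 : ℝ) ^ k) ^ (-r) := by gcongr
      _ = _ := by rw [pow_succ, mul_rpow (by positivity) zero_le_two]; ring
  choose net hcard hnetW hnet using fun k => exists_isUniformNet_of_entropyNum_lt hWM (hent_lt k)
  refine ⟨fun | 0 => {0} | k + 1 => net k, rfl, ?_, ?_, ?_⟩
  · rintro (_ | k)
    · simp
    · exact (hcard k).trans (Nat.pow_le_pow_right two_pos (Nat.pow_le_pow_right two_pos k.le_succ))
  · rintro (_ | k)
    · simp
    · exact (hnetW k).trans (Set.subset_insert 0 W)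
  · rintro (_ | k)
    · refine fun f hf => ⟨0, mem_singleton_self _, fun x => ?_⟩
      simp only [pow_zero, one_rpow, mul_one, Pi.zero_apply, sub_zero]
      linarith [hWM f hf x]
    · exact hnet k

end Nets

theorem abs_sq_sub_sq_le {a b M δ : ℝ} (ha : |a| ≤ M) (hb : |b| ≤ M) (hab : |a - b| ≤ δ) :
    |a ^ 2 - b ^ 2| ≤ 2 * M * δ :=
  calc |a ^ 2 - b ^ 2| = |a + b| * |a - b| := by rw [sq_sub_sq, abs_mul]
    _ ≤ (M + M) * δ := mul_le_mul ((abs_add_le a b).trans (add_le_add ha hb)) hab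
        (abs_nonneg _) (by linarith [abs_nonneg a])
    _ = 2 * M * δ := by ring

theorem sum_two_pow_two_pow_mul_exp_lt_one (L : ℕ) :
    ∑ k ∈ range L, (2 : ℝ) ^ 2 ^ (k + 2) * (2 * exp (-2 ^ (k + 3))) < 1 := by
  have hterm : ∀ k, (2 : ℝ) ^ 2 ^ (k + 2) * (2 * exp (-2 ^ (k + 3))) ≤ (1 / 2) ^ k / 4 := by
    intro k
    set n := 2 ^ (k + 2) with hn
    have hexp : (2 : ℝ) ^ (2 * n) ≤ exp (2 ^ (k + 3)) :=
      calc (2 : ℝ) ^ (2 * n) ≤ exp 1 ^ (2 * n) := pow_le_pow_left₀ two_pos.le exp_one_gt_two.le _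
        _ = exp (2 ^ (k + 3)) := by rw [← exp_nat_mul, hn]; push_cast; ring_nf
    have hkn : k + 3 ≤ n := Nat.lt_two_pow_self
    calc (2 : ℝ) ^ n * (2 * exp (-2 ^ (k + 3))) = 2 * 2 ^ n / exp (2 ^ (k + 3)) := by
          rw [exp_neg]; ring
      _ ≤ 2 * 2 ^ n / 2 ^ (2 * n) := by gcongr
      _ = 2 / 2 ^ n := by rw [two_mul n, pow_add]; field_simp
      _ ≤ 2 / 2 ^ (k + 3) := by gcongr; exact one_le_two
      _ = (1 / 2) ^ k / 4 := by rw [pow_add, div_pow, one_pow]; field_simp; norm_num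
  calc _ ≤ ∑ k ∈ range L, (1 / 2 : ℝ) ^ k / 4 := sum_le_sum fun k _ => hterm k
    _ = (∑ k ∈ range L, (1 / 2 : ℝ) ^ k) / 4 := by rw [sum_div]
    _ ≤ 2 / 4 := by gcongr; exact sum_geometric_two_le L
    _ < 1 := by norm_num

theorem two_pow_rpow_neg_le {x r : ℝ} {L : ℕ} (hx : 0 < x) (hr0 : 0 ≤ r) (hr1 : r ≤ 1)
    (hxL : x ≤ 2 ^ (L + 1)) : ((2 : ℝ) ^ L) ^ (-r) ≤ 2 * x ^ (-r) :=
  calc ((2 : ℝ) ^ L) ^ (-r) ≤ (x / 2) ^ (-r) :=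
        rpow_le_rpow_of_nonpos (by positivity) (by rw [pow_succ] at hxL; linarith)
          (neg_nonpos.mpr hr0)
    _ = 2 ^ r * x ^ (-r) := by
        rw [div_rpow hx.le zero_le_two, rpow_neg zero_le_two, div_inv_eq_mul, mul_comm]
    _ ≤ 2 * x ^ (-r) := by
        gcongr
        simpa using rpow_le_rpow_of_exponent_le one_le_two hr1

theorem sum_two_pow_rpow_neg_mul_sqrt_le {x r : ℝ} {L : ℕ} (hr : r < 1 / 2) (hxL : 2 ^ L ≤ x) :
    ∑ k ∈ range L, ((2 : ℝ) ^ k) ^ (-r) * √(2 ^ k / x) ≤ x ^ (-r) / (2 ^ (1 / 2 - r) - 1) := by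
  have hx : 0 < x := lt_of_lt_of_le (by positivity) hxL
  set a : ℝ := 2 ^ (1 / 2 - r)
  have ha : 1 < a := one_lt_rpow one_lt_two (by linarith)
  have hterm : ∀ k : ℕ, ((2 : ℝ) ^ k) ^ (-r) * √(2 ^ k / x) = a ^ k * x ^ (-(1 / 2) : ℝ) := by
    intro k
    rw [sqrt_div' _ hx.le, sqrt_eq_rpow, sqrt_eq_rpow, ← rpow_pow_comm zero_le_two, rpow_neg hx.le,
      div_eq_mul_inv, ← mul_assoc, ← rpow_pow_comm zero_le_two, ← mul_pow, ← rpow_add two_pos,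
      neg_add_eq_sub]
  have haL : a ^ L ≤ x ^ (1 / 2 - r) := by
    rw [rpow_pow_comm zero_le_two]
    exact rpow_le_rpow (by positivity) hxL (by linarith)
  calc ∑ k ∈ range L, ((2 : ℝ) ^ k) ^ (-r) * √(2 ^ k / x)
      = (∑ k ∈ range L, a ^ k) * x ^ (-(1 / 2) : ℝ) := by simp only [hterm, sum_mul]
    _ ≤ a ^ L / (a - 1) * x ^ (-(1 / 2) : ℝ) := by
        gcongr
        rw [geom_sum_eq ha.ne']
        gcongr
        linarith
    _ ≤ x ^ (1 / 2 - r) / (a - 1) * x ^ (-(1 / 2) : ℝ) := by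
        gcongr
    _ = x ^ (-r) / (a - 1) := by
        rw [div_mul_eq_mul_div, ← rpow_add hx]
        ring_nf

section Discretization

variable {α : Type*} [MeasurableSpace α]

noncomputable def empiricalError (μ : Measure α) {m : ℕ} (ξ : Fin m → α) (h : α → ℝ) : ℝ :=
  ∫ x, h x ∂μ - (1 / (m : ℝ)) * ∑ j, h (ξ j)

theorem integrable_sq_of_abs_le (μ : Measure α) [IsFiniteMeasure μ] {g : α → ℝ} {M : ℝ}
    (hg : Measurable g) (hgM : ∀ x, |g x| ≤ M) : Integrable (fun x => g x ^ 2) μ :=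
  Integrable.of_bound (hg.pow_const 2).aestronglyMeasurable (M ^ 2) <| ae_of_all _ fun x => by
    simpa only [Real.norm_eq_abs, abs_pow] using pow_le_pow_left₀ (abs_nonneg _) (hgM x) 2

theorem empiricalError_sub (μ : Measure α) {m : ℕ} (ξ : Fin m → α) {f g : α → ℝ}
    (hf : Integrable f μ) (hg : Integrable g μ) :
    empiricalError μ ξ (fun x => f x - g x) = empiricalError μ ξ f - empiricalError μ ξ g := by
  simp only [empiricalError, integral_sub hf hg, sum_sub_distrib]
  ring

theorem abs_empiricalError_le (μ : Measure α) [IsProbabilityMeasure μ] {m : ℕ} (ξ : Fin m → α)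
    {h : α → ℝ} {c : ℝ} (hc : ∀ x, |h x| ≤ c) : |empiricalError μ ξ h| ≤ 2 * c := by
  have hint : |∫ x, h x ∂μ| ≤ c := by
    simpa using norm_integral_le_of_norm_le_const (μ := μ)
      (ae_of_all _ fun x => (Real.norm_eq_abs (h x)).trans_le (hc x))
  have hmean : |(1 / (m : ℝ)) * ∑ j, h (ξ j)| ≤ c := by
    rcases m.eq_zero_or_pos with rfl | hm
    · simpa using (abs_nonneg _).trans hint
    calc |(1 / (m : ℝ)) * ∑ j, h (ξ j)| ≤ (1 / (m : ℝ)) * ∑ _j : Fin m, c := by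
          rw [abs_mul, abs_of_pos (by positivity)]
          gcongr
          exact (abs_sum_le_sum_abs _ _).trans (sum_le_sum fun j _ => hc _)
      _ = c := by field_simp; simp
  rw [empiricalError]
  linarith [abs_sub (∫ x, h x ∂μ) ((1 / (m : ℝ)) * ∑ j, h (ξ j))]

theorem abs_empiricalError_sq_le_of_chain (μ : Measure α) [IsProbabilityMeasure μ] {m : ℕ}
    (ξ : Fin m → α) {f : α → ℝ} {q : ℕ → α → ℝ} {M δ : ℝ} {L : ℕ} {t : ℕ → ℝ}
    (hf : Measurable f) (hfM : ∀ x, |f x| ≤ M) (hq : ∀ k, Measurable (q k))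
    (hqM : ∀ k x, |q k x| ≤ M) (hq0 : q 0 = 0) (hfq : ∀ x, |f x - q L x| ≤ δ)
    (hstep : ∀ k < L, |empiricalError μ ξ (fun x => q (k + 1) x ^ 2 - q k x ^ 2)| ≤ t k) :
    |empiricalError μ ξ (fun x => f x ^ 2)| ≤ 4 * M * δ + ∑ k ∈ range L, t k := by
  set e : ℕ → ℝ := fun k => empiricalError μ ξ (fun x => q k x ^ 2)
  have hint : ∀ k, Integrable (fun x => q k x ^ 2) μ := fun k =>
    integrable_sq_of_abs_le μ (hq k) (hqM k)
  have he0 : e 0 = 0 := by simp [e, hq0, empiricalError]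
  have hchain : |e L| ≤ ∑ k ∈ range L, t k :=
    calc |e L| = dist (e 0) (e L) := by rw [Real.dist_eq, he0, zero_sub, abs_neg]
      _ ≤ ∑ k ∈ range L, dist (e k) (e (k + 1)) := dist_le_range_sum_dist e L
      _ ≤ ∑ k ∈ range L, t k := sum_le_sum fun k hk => by
        rw [dist_comm, Real.dist_eq, ← empiricalError_sub μ ξ (hint _) (hint _)]
        exact hstep k (mem_range.mp hk)
  have happrox : |empiricalError μ ξ (fun x => f x ^ 2) - e L| ≤ 4 * M * δ := by
    rw [← empiricalError_sub μ ξ (integrable_sq_of_abs_le μ hf hfM) (hint L)]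
    linarith [abs_empiricalError_le μ ξ fun x => abs_sq_sub_sq_le (hfM x) (hqM L x) (hfq x)]
  linarith [abs_sub_abs_le_abs_sub (empiricalError μ ξ (fun x => f x ^ 2)) (e L)]

theorem hasSubgaussianMGF_eval_sub_integral (μ : Measure α) [IsProbabilityMeasure μ]
    {ι : Type*} [Fintype ι] {h : α → ℝ} {B : ℝ} (hh : Measurable h) (hhB : ∀ x, |h x| ≤ B)
    (j : ι) :
    HasSubgaussianMGF (fun ξ : ι → α => h (ξ j) - ∫ x, h x ∂μ) (‖B‖₊ ^ 2)
      (Measure.pi fun _ => μ) := by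
  have hIcc : ∀ᵐ x ∂μ, h x ∈ Set.Icc (-B) B := ae_of_all _ fun x => abs_le.mp (hhB x)
  have hc : (‖B - -B‖₊ / 2) ^ 2 = ‖B‖₊ ^ 2 := by
    rw [sub_neg_eq_add, ← two_mul, nnnorm_mul]; simp
  have hsub : HasSubgaussianMGF (fun x => h x - ∫ x, h x ∂μ) (‖B‖₊ ^ 2)
      ((Measure.pi fun _ : ι => μ).map (Function.eval j)) := by
    rw [(measurePreserving_eval _ j).map_eq, ← hc]
    exact hasSubgaussianMGF_of_mem_Icc hh.aemeasurable hIcc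
  exact HasSubgaussianMGF.of_map (μ := Measure.pi fun _ : ι => μ)
    (X := fun x => h x - ∫ x, h x ∂μ) (measurable_pi_apply j).aemeasurable hsub

theorem empiricalError_neg (μ : Measure α) {m : ℕ} (ξ : Fin m → α) (h : α → ℝ) :
    empiricalError μ ξ (fun x => -h x) = -empiricalError μ ξ h := by
  simp only [empiricalError, integral_neg, sum_neg_distrib]
  ring

theorem measureReal_le_neg_empiricalError_le (μ : Measure α) [IsProbabilityMeasure μ] {m : ℕ}
    (hm : 0 < m) {h : α → ℝ} {B t : ℝ} (hh : Measurable h) (hhB : ∀ x, |h x| ≤ B) (ht : 0 ≤ t) :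
    (Measure.pi fun _ : Fin m => μ).real {ξ | t ≤ -empiricalError μ ξ h} ≤
      exp (-(m * t ^ 2) / (2 * B ^ 2)) := by
  have hm' : (0 : ℝ) < m := Nat.cast_pos.mpr hm
  have hset : {ξ : Fin m → α | t ≤ -empiricalError μ ξ h} =
      {ξ | m * t ≤ ∑ j, (h (ξ j) - ∫ x, h x ∂μ)} := by
    ext ξ
    simp only [Set.mem_ofPred_eq, empiricalError, sum_sub_distrib, sum_const, card_univ,
      Fintype.card_fin, nsmul_eq_mul]
    rw [← mul_le_mul_iff_of_pos_left hm']
    field_simp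
    ring_nf
  have hind : iIndepFun (fun (j : Fin m) (ξ : Fin m → α) => h (ξ j) - ∫ x, h x ∂μ)
      (Measure.pi fun _ => μ) :=
    iIndepFun_pi (X := fun _ x => h x - ∫ x, h x ∂μ) fun _ => (hh.sub_const _).aemeasurable
  rw [hset]
  refine (HasSubgaussianMGF.measure_sum_ge_le_of_iIndepFun hind (s := univ)
    (fun j _ => hasSubgaussianMGF_eval_sub_integral μ hh hhB j) (by positivity)).trans_eq ?_
  congr 1
  simp only [sum_const, card_univ, Fintype.card_fin, nsmul_eq_mul, NNReal.coe_mul,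
    NNReal.coe_natCast, NNReal.coe_pow, coe_nnnorm, norm_eq_abs, sq_abs]
  field_simp

theorem measureReal_abs_empiricalError_gt_le (μ : Measure α) [IsProbabilityMeasure μ] {m : ℕ}
    (hm : 0 < m) {h : α → ℝ} {B t : ℝ} (hh : Measurable h) (hhB : ∀ x, |h x| ≤ B) (ht : 0 ≤ t) :
    (Measure.pi fun _ : Fin m => μ).real {ξ | t < |empiricalError μ ξ h|} ≤
      2 * exp (-(m * t ^ 2) / (2 * B ^ 2)) := by
  have hsub : {ξ : Fin m → α | t < |empiricalError μ ξ h|} ⊆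
      {ξ | t ≤ -empiricalError μ ξ h} ∪ {ξ | t ≤ -empiricalError μ ξ (fun x => -h x)} := by
    intro ξ hξ
    rw [Set.mem_ofPred_eq, lt_abs] at hξ
    rw [Set.mem_union, Set.mem_ofPred_eq, Set.mem_ofPred_eq, empiricalError_neg, neg_neg]
    exact hξ.imp le_of_lt le_of_lt |>.symm
  calc _ ≤ _ := measureReal_mono hsub
    _ ≤ _ := measureReal_union_le _ _
    _ ≤ _ := add_le_add (measureReal_le_neg_empiricalError_le μ hm hh hhB ht)
        (measureReal_le_neg_empiricalError_le μ hm hh.neg (fun x => (abs_neg _).trans_le (hhB x))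
          ht)
    _ = _ := by ring

theorem exists_forall_abs_empiricalError_le (μ : Measure α) [IsProbabilityMeasure μ] {m : ℕ}
    (hm : 0 < m) {ι : Type*} (s : Finset ι) (h : ι → α → ℝ) (B t : ι → ℝ)
    (hh : ∀ i ∈ s, Measurable (h i)) (hhB : ∀ i ∈ s, ∀ x, |h i x| ≤ B i)
    (ht : ∀ i ∈ s, 0 ≤ t i) (hsum : ∑ i ∈ s, 2 * exp (-(m * t i ^ 2) / (2 * B i ^ 2)) < 1) :
    ∃ ξ : Fin m → α, ∀ i ∈ s, |empiricalError μ ξ (h i)| ≤ t i := by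
  by_contra! hbad
  have hcover : Set.univ ⊆ ⋃ i ∈ s, {ξ : Fin m → α | t i < |empiricalError μ ξ (h i)|} := by
    intro ξ _
    simpa using hbad ξ
  have hprob := calc (1 : ℝ) = (Measure.pi fun _ : Fin m => μ).real Set.univ := by simp
    _ ≤ _ := measureReal_mono hcover (measure_ne_top _ _)
    _ ≤ _ := measureReal_biUnion_finset_le _ _
    _ ≤ _ := sum_le_sum fun i hi =>
      measureReal_abs_empiricalError_gt_le μ hm (hh i hi) (hhB i hi) (ht i hi)
  linarith

theorem exists_forall_abs_empiricalError_sq_sub_sq_le (μ : Measure α) [IsProbabilityMeasure μ]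
    {m : ℕ} (hm : 0 < m) (L : ℕ) {N : ℕ → Finset (α → ℝ)} {ε : ℕ → ℝ} {M : ℝ} (hM : 0 < M)
    (hε : ∀ k, 0 < ε k) (hNcard : ∀ k, #(N k) ≤ 2 ^ 2 ^ k)
    (hNmeas : ∀ k, ∀ g ∈ N k, Measurable g) (hNM : ∀ k, ∀ g ∈ N k, ∀ x, |g x| ≤ M) :
    ∃ ξ : Fin m → α, ∀ k < L, ∀ g ∈ N (k + 1), ∀ h ∈ N k,
      (∀ x, |g x - h x| ≤ ε (k + 1) + ε k) →
        |empiricalError μ ξ (fun x => g x ^ 2 - h x ^ 2)| ≤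
          8 * M * (ε (k + 1) + ε k) * √(2 ^ k / m) := by
  classical
  set links : ℕ → Finset ((α → ℝ) × (α → ℝ)) := fun k =>
    (N (k + 1) ×ˢ N k).filter fun p => ∀ x, |p.1 x - p.2 x| ≤ ε (k + 1) + ε k
  set B : ℕ → ℝ := fun k => 2 * M * (ε (k + 1) + ε k)
  set t : ℕ → ℝ := fun k => 8 * M * (ε (k + 1) + ε k) * √(2 ^ k / m)
  -- `t = 4 B √(2 ^ k / m)`, so the Hoeffding bound `2 exp (-2 ^ (k + 3))` beats the at most
  -- `2 ^ 2 ^ (k + 2)` pairs of level `k`; this needs `B k ≠ 0` (else the exponent is `x / 0 = 0`)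
  have hexp : ∀ k, -(m * t k ^ 2) / (2 * B k ^ 2) = -2 ^ (k + 3) := by
    intro k
    have hε' : ε (k + 1) + ε k ≠ 0 := (add_pos (hε _) (hε _)).ne'
    simp only [t, B, mul_pow, sq_sqrt (by positivity : (0 : ℝ) ≤ 2 ^ k / m)]
    field_simp
    ring
  have hcard : ∀ k, (#(links k) : ℝ) ≤ 2 ^ 2 ^ (k + 2) := fun k => by
    have hpow : 2 ^ 2 ^ (k + 1) * 2 ^ 2 ^ k ≤ 2 ^ 2 ^ (k + 2) := by
      rw [← pow_add]; exact Nat.pow_le_pow_right two_pos (by rw [pow_succ, pow_succ]; omega)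
    exact_mod_cast (card_filter_le _ _).trans <| (card_product _ _).trans_le <|
      (Nat.mul_le_mul (hNcard _) (hNcard _)).trans hpow
  have hlink : ∀ i ∈ (range L).sigma links, i.2.1 ∈ N (i.1 + 1) ∧ i.2.2 ∈ N i.1 ∧
      ∀ x, |i.2.1 x - i.2.2 x| ≤ ε (i.1 + 1) + ε i.1 := fun i hi => by
    simp only [links, mem_sigma, mem_filter, mem_product] at hi
    exact ⟨hi.2.1.1, hi.2.1.2, hi.2.2⟩
  have hsum : ∑ i ∈ (range L).sigma links, 2 * exp (-(m * t i.1 ^ 2) / (2 * B i.1 ^ 2)) < 1 :=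
    calc _ = ∑ k ∈ range L, (#(links k) : ℝ) * (2 * exp (-2 ^ (k + 3))) := by
          rw [sum_sigma]
          simp only [hexp, sum_const, nsmul_eq_mul]
      _ ≤ ∑ k ∈ range L, (2 : ℝ) ^ 2 ^ (k + 2) * (2 * exp (-2 ^ (k + 3))) := by
          gcongr with k; exact hcard k
      _ < 1 := sum_two_pow_two_pow_mul_exp_lt_one L
  obtain ⟨ξ, hξ⟩ := exists_forall_abs_empiricalError_le μ hm ((range L).sigma links)
    (fun i x => i.2.1 x ^ 2 - i.2.2 x ^ 2) (fun i => B i.1) (fun i => t i.1)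
    (fun i hi => ((hNmeas _ _ (hlink i hi).1).pow_const 2).sub
      ((hNmeas _ _ (hlink i hi).2.1).pow_const 2))
    (fun i hi x => abs_sq_sub_sq_le (hNM _ _ (hlink i hi).1 x) (hNM _ _ (hlink i hi).2.1 x)
      ((hlink i hi).2.2 x))
    (fun i _ => by have := hε i.1; have := hε (i.1 + 1); positivity) hsum
  exact ⟨ξ, fun k hk g hg h hh hclose => hξ ⟨k, (g, h)⟩
    (mem_sigma.mpr ⟨mem_range.mpr hk, mem_filter.mpr ⟨mem_product.mpr ⟨hg, hh⟩, hclose⟩⟩)⟩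

noncomputable def chainingBound (M : ℝ) (ε : ℕ → ℝ) (m L : ℕ) : ℝ :=
  4 * M * ε L + ∑ k ∈ range L, 8 * M * (ε (k + 1) + ε k) * √(2 ^ k / m)

theorem exists_forall_abs_empiricalError_sq_le_chainingBound (μ : Measure α)
    [IsProbabilityMeasure μ] {m : ℕ} (hm : 0 < m) (L : ℕ) {W : Set (α → ℝ)}
    {N : ℕ → Finset (α → ℝ)} {ε : ℕ → ℝ} {M : ℝ} (hM : 0 < M) (hε : ∀ k, 0 < ε k)
    (hN0 : N 0 = {0}) (hNcard : ∀ k, #(N k) ≤ 2 ^ 2 ^ k) (hNW : ∀ k, ↑(N k) ⊆ insert 0 W)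
    (hWmeas : ∀ f ∈ W, Measurable f) (hWM : ∀ f ∈ W, ∀ x, |f x| ≤ M)
    (hnet : ∀ k, IsUniformNet W (N k) (ε k)) :
    ∃ ξ : Fin m → α, ∀ f ∈ W,
      |empiricalError μ ξ (fun x => f x ^ 2)| ≤ chainingBound M ε m L := by
  have hNmeas : ∀ k, ∀ g ∈ N k, Measurable g := fun k g hg => by
    rcases hNW k hg with rfl | hgW
    exacts [measurable_const, hWmeas g hgW]
  have hNM : ∀ k, ∀ g ∈ N k, ∀ x, |g x| ≤ M := fun k g hg x => by
    rcases hNW k hg with rfl | hgW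
    exacts [by simpa using hM.le, hWM g hgW x]
  obtain ⟨ξ, hξ⟩ :=
    exists_forall_abs_empiricalError_sq_sub_sq_le μ hm L hM hε hNcard hNmeas hNM
  refine ⟨ξ, fun f hf => ?_⟩
  choose q hqN hfq using fun k => hnet k f hf
  refine abs_empiricalError_sq_le_of_chain μ ξ (hWmeas f hf) (hWM f hf)
    (fun k => hNmeas k _ (hqN k)) (fun k => hNM k _ (hqN k)) (by simpa [hN0] using hqN 0)
    (hfq L) fun k hk => hξ k hk _ (hqN _) _ (hqN _) fun x => ?_
  calc |q (k + 1) x - q k x| ≤ |q (k + 1) x - f x| + |f x - q k x| := abs_sub_le _ _ _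
    _ ≤ _ := add_le_add ((abs_sub_comm _ _).trans_le (hfq _ x)) (hfq _ x)

end Discretization

theorem chainingBound_geometric_le {M D r : ℝ} {m : ℕ} (hM : 0 ≤ M) (hD : 0 ≤ D) (hr0 : 0 < r)
    (hr : r < 1 / 2) (hm : 0 < m) :
    chainingBound M (fun k => D * ((2 : ℝ) ^ k) ^ (-r)) m (Nat.log 2 m) ≤
      (8 * M * D + 16 * M * D / (2 ^ (1 / 2 - r) - 1)) * (m : ℝ) ^ (-r) := by
  set L := Nat.log 2 m
  have hLm : (2 : ℝ) ^ L ≤ m := by exact_mod_cast Nat.pow_log_le_self 2 hm.ne'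
  have hmL : (m : ℝ) ≤ 2 ^ (L + 1) := by exact_mod_cast (Nat.lt_pow_succ_log_self one_lt_two m).le
  have hterm : ∀ k : ℕ, 8 * M * (D * ((2 : ℝ) ^ (k + 1)) ^ (-r) + D * ((2 : ℝ) ^ k) ^ (-r)) *
      √(2 ^ k / m) ≤ 16 * M * D * (((2 : ℝ) ^ k) ^ (-r) * √(2 ^ k / m)) := fun k =>
    calc _ ≤ 8 * M * (D * ((2 : ℝ) ^ k) ^ (-r) + D * ((2 : ℝ) ^ k) ^ (-r)) * √(2 ^ k / m) := by
          gcongr 8 * M * (D * ?_ + _) * _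
          exact rpow_le_rpow_of_nonpos (by positivity) (pow_le_pow_right₀ one_le_two k.le_succ)
            (neg_nonpos.mpr hr0.le)
      _ = _ := by ring
  calc _ ≤ 4 * M * (D * (2 * (m : ℝ) ^ (-r))) +
        16 * M * D * ∑ k ∈ range L, ((2 : ℝ) ^ k) ^ (-r) * √(2 ^ k / m) := by
        rw [chainingBound, mul_sum]
        refine add_le_add ?_ (sum_le_sum fun k _ => hterm k)
        gcongr
        exact two_pow_rpow_neg_le (Nat.cast_pos.mpr hm) hr0.le (by linarith) hmL
    _ ≤ 4 * M * (D * (2 * (m : ℝ) ^ (-r))) +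
        16 * M * D * ((m : ℝ) ^ (-r) / (2 ^ (1 / 2 - r) - 1)) := by
        gcongr
        exact sum_two_pow_rpow_neg_mul_sqrt_le hr hLm
    _ = _ := by ring

theorem discretization_entropy_polynomial_general {d : ℕ} (Ω : Set (Fin d → ℝ))
    (μ : Measure Ω) [IsProbabilityMeasure μ]
    (W : Set (Ω → ℝ)) (M : ℝ) (C₁ r : ℝ) (hr0 : 0 < r) (hr : r < 1 / 2)
    (hWc : ∀ f ∈ W, Continuous f)
    (hWb : ∀ f ∈ W, ∀ x, |f x| ≤ M)
    (hent : ∀ n : ℕ, 1 ≤ n → entropyNum W n ≤ C₁ * (n : ℝ) ^ (-r)) :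
    ∃ K : ℝ, ∀ m : ℕ, 0 < m → ∃ ξ : Fin m → Ω, ∀ f ∈ W,
      |(∫ x, (f x) ^ 2 ∂μ) - (1 / (m : ℝ)) * ∑ j, (f (ξ j)) ^ 2|
        ≤ K * (m : ℝ) ^ (-r) := by
  set M' := max M 1
  have hM' : 0 < M' := zero_lt_one.trans_le (le_max_right _ _)
  have hWM : ∀ f ∈ W, ∀ x, |f x| ≤ M' := fun f hf x => (hWb f hf x).trans (le_max_left _ _)
  have hC₁ : 0 ≤ C₁ := by simpa using (entropyNum_nonneg W 1).trans (hent 1 le_rfl)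
  set D := 2 * (C₁ + M')
  obtain ⟨N, hN0, hNcard, hNW, hnet⟩ := exists_nets_of_entropyNum_le hM' (by linarith) hWM hent
  refine ⟨8 * M' * D + 16 * M' * D / (2 ^ (1 / 2 - r) - 1), fun m hm => ?_⟩
  obtain ⟨ξ, hξ⟩ := exists_forall_abs_empiricalError_sq_le_chainingBound μ hm (Nat.log 2 m)
    hM' (fun k => by positivity) hN0 hNcard hNW (fun f hf => (hWc f hf).measurable) hWM hnet
  exact ⟨ξ, fun f hf => (hξ f hf).trans
    (chainingBound_geometric_le hM'.le (by positivity) hr0 hr hm)⟩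

/-- If `W` is a class of continuous functions on a compact `Ω ⊂ ℝ^d` with
`‖f‖_∞ ≤ M` for all `f ∈ W` and `ε_n(W) ≤ C₁ n^{−r}` for all `n ≥ 1`, where `r ∈ (0, 1/2)`,
then there is a constant `K` such that for every `m` there are points `ξ¹,…,ξᵐ ∈ Ω` with
`|‖f‖_{L₂(μ)}² − (1/m)∑ⱼ f(ξʲ)²| ≤ K m^{−r}` for all `f ∈ W`. -/
theorem discretization_entropy_polynomial {d : ℕ} (Ω : Set (Fin d → ℝ)) (hΩ : IsCompact Ω)
    (μ : Measure Ω) [IsProbabilityMeasure μ]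
    (W : Set (Ω → ℝ)) (M : ℝ) (C₁ r : ℝ) (hr0 : 0 < r) (hr : r < 1 / 2)
    (hWc : ∀ f ∈ W, Continuous f)
    (hWb : ∀ f ∈ W, ∀ x, |f x| ≤ M)
    (hent : ∀ n : ℕ, 1 ≤ n → entropyNum W n ≤ C₁ * (n : ℝ) ^ (-r)) :
    ∃ K : ℝ, ∀ m : ℕ, 0 < m → ∃ ξ : Fin m → Ω, ∀ f ∈ W,
      |(∫ x, (f x) ^ 2 ∂μ) - (1 / (m : ℝ)) * ∑ j, (f (ξ j)) ^ 2|
        ≤ K * (m : ℝ) ^ (-r) :=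
  discretization_entropy_polynomial_general Ω μ W M C₁ r hr0 hr hWc hWb hent
end

section
/- Let r > 1/2 and d ∈ ℕ. For k ∈ ℤ set k* := max(|k|,1). Then there exists a constant C = C(r,d) such that for every n = (n_1,…,n_d) ∈ ℤ^d, ∑_{k∈ℤ^d} ∏_{j=1}^d (k_j*)^{−2r} ((n_j−k_j)*)^{−2r} ≤ C² ∏_{j=1}^d (n_j*)^{−2r}. In particular, in dimension d = 1: for all n ∈ ℤ, ∑_{k∈ℤ} (k*)^{−2r}((n−k)*)^{−2r} ≤ C(r) (n*)^{−2r}. -/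
/-!
Since `n = k + (n - k)` and `·*` is subadditive, one of `k*`, `(n - k)*` is at least `n* / 2`,
so `(k*)^{-s} ((n-k)*)^{-s} ≤ 2^s (n*)^{-s} ((k*)^{-s} + ((n-k)*)^{-s})`. Summing over `k`
bounds the one-dimensional convolution by `2^{s+1} (∑_k (k*)^{-s}) (n*)^{-s}`, which is finite
for `s = 2r > 1`. The `d`-dimensional sum factors into a product of one-dimensional ones.
-/

open Finset

/-- For `k ∈ ℤ`, `k* := max(|k|, 1)` (as a real number). -/
noncomputable def kstar (k : ℤ) : ℝ := max |(k : ℝ)| 1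

lemma kstar_pos (k : ℤ) : 0 < kstar k := one_pos.trans_le (le_max_right _ _)

lemma kstar_rpow_nonneg (s : ℝ) (k : ℤ) : 0 ≤ kstar k ^ s := Real.rpow_nonneg (kstar_pos k).le _

lemma kstar_add_le (a b : ℤ) : kstar (a + b) ≤ kstar a + kstar b := by
  refine max_le ?_ (le_add_of_le_of_nonneg (le_max_right _ _) (kstar_pos b).le)
  push_cast
  exact (abs_add_le _ _).trans (add_le_add (le_max_left _ _) (le_max_left _ _))

lemma kstar_rpow_neg_le_of_le_two_mul {s : ℝ} (hs : 0 ≤ s) {m n : ℤ}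
    (h : kstar n ≤ 2 * kstar m) : kstar m ^ (-s) ≤ 2 ^ s * kstar n ^ (-s) :=
  calc kstar m ^ (-s) ≤ (kstar n / 2) ^ (-s) :=
        Real.rpow_le_rpow_of_nonpos (by linarith [kstar_pos n]) (by linarith) (by linarith)
    _ = 2 ^ s * kstar n ^ (-s) := by
        rw [Real.div_rpow (kstar_pos n).le zero_le_two, Real.rpow_neg zero_le_two]
        field_simp

lemma kstar_rpow_neg_mul_le {s : ℝ} (hs : 0 ≤ s) (n k : ℤ) :
    kstar k ^ (-s) * kstar (n - k) ^ (-s) ≤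
      2 ^ s * kstar n ^ (-s) * (kstar k ^ (-s) + kstar (n - k) ^ (-s)) := by
  have hsplit : kstar n ≤ kstar k + kstar (n - k) := by
    simpa using kstar_add_le k (n - k)
  have hk := kstar_rpow_nonneg (-s) k
  have hnk := kstar_rpow_nonneg (-s) (n - k)
  rcases le_total (kstar (n - k)) (kstar k) with hle | hle
  · have := kstar_rpow_neg_le_of_le_two_mul hs (m := k) (n := n) (by linarith)
    nlinarith
  · have := kstar_rpow_neg_le_of_le_two_mul hs (m := n - k) (n := n) (by linarith)
    nlinarith

lemma summable_kstar_rpow_neg {s : ℝ} (hs : 1 < s) : Summable fun k : ℤ => kstar k ^ (-s) := by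
  have hupdate :
      (fun k : ℤ => kstar k ^ (-s)) = Function.update (fun k : ℤ => |(k : ℝ)| ^ (-s)) 0 1 := by
    funext k
    rcases eq_or_ne k 0 with rfl | hk
    · simp [kstar]
    · have h1 : (1 : ℝ) ≤ |(k : ℝ)| := by exact_mod_cast Int.one_le_abs hk
      simp [kstar, hk, max_eq_left h1]
  rw [hupdate]
  exact (Real.summable_abs_int_rpow hs).update 0 1

lemma sum_kstar_rpow_neg_le_tsum {s : ℝ} (hs : 1 < s) (S : Finset ℤ) :
    ∑ k ∈ S, kstar k ^ (-s) ≤ ∑' k : ℤ, kstar k ^ (-s) :=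
  (summable_kstar_rpow_neg hs).sum_le_tsum S fun k _ => kstar_rpow_nonneg _ k

lemma sum_kstar_rpow_neg_mul_le {s : ℝ} (hs : 1 < s) (n : ℤ) (S : Finset ℤ) :
    ∑ k ∈ S, kstar k ^ (-s) * kstar (n - k) ^ (-s) ≤
      2 ^ (s + 1) * (∑' k : ℤ, kstar k ^ (-s)) * kstar n ^ (-s) := by
  set T := ∑' k : ℤ, kstar k ^ (-s)
  have hreflect : ∑ k ∈ S, kstar (n - k) ^ (-s) ≤ T := by
    calc ∑ k ∈ S, kstar (n - k) ^ (-s) = ∑ m ∈ S.image (n - ·), kstar m ^ (-s) :=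
          (sum_image (f := fun m => kstar m ^ (-s)) fun _ _ _ _ h => sub_right_injective h).symm
      _ ≤ T := sum_kstar_rpow_neg_le_tsum hs _
  have hcoef : 0 ≤ (2 : ℝ) ^ s * kstar n ^ (-s) :=
    mul_nonneg (Real.rpow_nonneg zero_le_two _) (kstar_rpow_nonneg _ n)
  calc ∑ k ∈ S, kstar k ^ (-s) * kstar (n - k) ^ (-s)
      ≤ 2 ^ s * kstar n ^ (-s) * (∑ k ∈ S, kstar k ^ (-s) + ∑ k ∈ S, kstar (n - k) ^ (-s)) := by
        rw [← sum_add_distrib, mul_sum]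
        exact sum_le_sum fun k _ => kstar_rpow_neg_mul_le (by linarith) n k
    _ ≤ 2 ^ s * kstar n ^ (-s) * (T + T) :=
        mul_le_mul_of_nonneg_left (add_le_add (sum_kstar_rpow_neg_le_tsum hs S) hreflect) hcoef
    _ = 2 ^ (s + 1) * T * kstar n ^ (-s) := by
        rw [Real.rpow_add_one two_ne_zero]
        ring

lemma tsum_kstar_rpow_neg_pos {s : ℝ} (hs : 1 < s) : 0 < ∑' k : ℤ, kstar k ^ (-s) :=
  (summable_kstar_rpow_neg hs).tsum_pos (fun k => kstar_rpow_nonneg _ k) 0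
    (Real.rpow_pos_of_pos (kstar_pos 0) _)

/-- Any finite set of `ι → α` lies in the box spanned by its coordinate projections, over
which the sum of a product splits into a product of sums. -/
lemma sum_prod_le_prod_of_forall_sum_le {ι α : Type*} [Fintype ι]
    {f : ι → α → ℝ} (hf : ∀ j m, 0 ≤ f j m) {B : ι → ℝ}
    (hB : ∀ j (T : Finset α), ∑ m ∈ T, f j m ≤ B j) (S : Finset (ι → α)) :
    ∑ k ∈ S, ∏ j, f j (k j) ≤ ∏ j, B j := by
  classical
  let box : (j : ι) → Finset α := fun j => S.image fun k => k j
  have hS : S ⊆ Fintype.piFinset box := fun k hk =>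
    Fintype.mem_piFinset.2 fun j => mem_image_of_mem _ hk
  calc ∑ k ∈ S, ∏ j, f j (k j)
      ≤ ∑ k ∈ Fintype.piFinset box, ∏ j, f j (k j) :=
        sum_le_sum_of_subset_of_nonneg hS fun k _ _ => prod_nonneg fun j _ => hf j _
    _ = ∏ j, ∑ m ∈ box j, f j m := (prod_univ_sum box f).symm
    _ ≤ ∏ j, B j :=
        prod_le_prod (fun j _ => sum_nonneg fun m _ => hf j m) fun j _ => hB j (box j)

/-- Let `r > 1/2` and `d ∈ ℕ`.  Then there is `C = C(r,d) > 0` such that for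
every `n ∈ ℤ^d`, `∑_{k∈ℤ^d} ∏_j (k_j*)^{−2r}((n_j−k_j)*)^{−2r} ≤ C² ∏_j (n_j*)^{−2r}`;
in particular, in dimension `1`: there is `C(r) > 0` with
`∑_{k∈ℤ} (k*)^{−2r}((n−k)*)^{−2r} ≤ C(r) (n*)^{−2r}` for all `n ∈ ℤ`.
(Sums over `ℤ^d` are expressed via arbitrary finite partial sums.) -/
theorem convolution_kstar_bound (r : ℝ) (hr : 1 / 2 < r) (d : ℕ) :
    (∃ C : ℝ, 0 < C ∧ ∀ n : Fin d → ℤ, ∀ S : Finset (Fin d → ℤ),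
      ∑ k ∈ S, ∏ j, kstar (k j) ^ (-(2 * r)) * kstar (n j - k j) ^ (-(2 * r))
        ≤ C ^ 2 * ∏ j, kstar (n j) ^ (-(2 * r))) ∧
    (∃ C₁ : ℝ, 0 < C₁ ∧ ∀ n : ℤ, ∀ S : Finset ℤ,
      ∑ k ∈ S, kstar k ^ (-(2 * r)) * kstar (n - k) ^ (-(2 * r))
        ≤ C₁ * kstar n ^ (-(2 * r))) := by
  have hs : 1 < 2 * r := by linarith
  set C₁ := 2 ^ (2 * r + 1) * ∑' k : ℤ, kstar k ^ (-(2 * r))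
  have hC₁ : 0 < C₁ := mul_pos (Real.rpow_pos_of_pos two_pos _) (tsum_kstar_rpow_neg_pos hs)
  refine ⟨⟨√(C₁ ^ d), by positivity, fun n S => ?_⟩, C₁, hC₁, sum_kstar_rpow_neg_mul_le hs⟩
  rw [Real.sq_sqrt (by positivity), ← Fin.prod_const, ← prod_mul_distrib]
  exact sum_prod_le_prod_of_forall_sum_le
    (fun j m => mul_nonneg (kstar_rpow_nonneg _ m) (kstar_rpow_nonneg _ (n j - m)))
    (fun j => sum_kstar_rpow_neg_mul_le hs (n j)) S
end

section
/- Let Ω be a compact subset of ℝ^d with a probability measure μ. Let V be a Banach space that is a linear subspace of C(Ω) such that the inclusion map V → C(Ω) is continuous, and let W := {f ∈ V : ‖f‖_V ≤ 1} be its unit ball. Then for every m ∈ ℕ, er_m^o(W, L_1) ≥ κ_m(W). -/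
open MeasureTheory Finset

noncomputable section

/-- `κ_m(W)`: the optimal error of numerical integration of the class `W` by cubature
formulas with `m` knots, `κ_m(W) = inf_{ξ,Λ} sup_{f∈W} |∫ f dμ − ∑ⱼ λⱼ f(ξʲ)|`. -/
def kappam {α : Type*} [MeasurableSpace α] (μ : Measure α)
    (W : Set (α → ℝ)) (m : ℕ) : ℝ :=
  ⨅ p : (Fin m → α) × (Fin m → ℝ), ⨆ f : W,
    |(∫ x, f.1 x ∂μ) - ∑ j, p.2 j * f.1 (p.1 j)|

/-- `er_m^o(W, L_q)`: the optimal weighted sampling discretization error of the `L_q` norm,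
`inf_{ξ,Λ} sup_{f∈W} |∫ |f|^q dμ − ∑ⱼ λⱼ |f(ξʲ)|^q|`. -/
def ermoLq {α : Type*} [MeasurableSpace α] (μ : Measure α)
    (W : Set (α → ℝ)) (q : ℕ) (m : ℕ) : ℝ :=
  ⨅ p : (Fin m → α) × (Fin m → ℝ), ⨆ f : W,
    |(∫ x, |f.1 x| ^ q ∂μ) - ∑ j, p.2 j * |f.1 (p.1 j)| ^ q|

/-! Fix knots `ξ` and weights `w`, and let `e` be the worst `L₁` discretization error of the
cubature `(ξ, w)` on `W`. A function of `W` vanishing at all knots has `|∫ f| ≤ ∫ |f| ≤ e`, so the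
integration functional `φ` has norm at most `e` on the subspace `Y = ⋂ⱼ ker δ_{ξʲ}`. A Hahn–Banach
extension `g` of `φ|_Y` with `‖g‖ ≤ e` makes `φ - g` vanish on `Y`, hence `φ - g = ∑ⱼ cⱼ δ_{ξʲ}`,
and the cubature `(ξ, c)` integrates every `f ∈ W` with error `|g f| ≤ e`. -/

theorem exists_norm_sub_sum_mul_le_of_forall_mem_iInf_ker {𝕜 E ι : Type*} [RCLike 𝕜]
    [NormedAddCommGroup E] [NormedSpace 𝕜 E] [Fintype ι] (φ : E →ₗ[𝕜] 𝕜) (δ : ι → E →ₗ[𝕜] 𝕜)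
    {e : ℝ} (h : ∀ v, ‖v‖ ≤ 1 → (∀ j, δ j v = 0) → ‖φ v‖ ≤ e) :
    ∃ c : ι → 𝕜, ∀ v, ‖φ v - ∑ j, c j * δ j v‖ ≤ e * ‖v‖ := by
  have he : 0 ≤ e := by simpa using h 0 (by simp) (by simp)
  set Y := ⨅ j, LinearMap.ker (δ j)
  have hY : ∀ v, v ∈ Y ↔ ∀ j, δ j v = 0 := by simp [Y, Submodule.mem_iInf]
  have hφY : ∀ y : Y, ‖φ y‖ ≤ e * ‖y‖ := fun y ↦ by
    simpa using (φ.comp Y.subtype).bound_of_ball_bound' one_pos e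
      (fun z hz ↦ h z (by simpa using hz) ((hY z).1 z.2)) y
  obtain ⟨g, hg, hg_norm⟩ :=
    exists_extension_norm_eq Y ((φ.comp Y.subtype).mkContinuous e hφY)
  have hker : Y ≤ LinearMap.ker (φ - g.toLinearMap) := fun v hv ↦ by
    simp only [LinearMap.mem_ker, LinearMap.sub_apply, ContinuousLinearMap.coe_coe, hg ⟨v, hv⟩]
    exact sub_self (φ v)
  obtain ⟨c, hc⟩ :=
    (Submodule.mem_span_range_iff_exists_fun 𝕜).1 (mem_span_of_iInf_ker_le_ker hker)
  refine ⟨c, fun v ↦ ?_⟩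
  have hgv : φ v - ∑ j, c j * δ j v = g v := by
    have hcv := congrArg (· v) hc
    simp only [LinearMap.sum_apply, LinearMap.smul_apply, smul_eq_mul, LinearMap.sub_apply,
      ContinuousLinearMap.coe_coe] at hcv
    rw [hcv, sub_sub_cancel]
  calc ‖φ v - ∑ j, c j * δ j v‖ = ‖g v‖ := by rw [hgv]
    _ ≤ ‖g‖ * ‖v‖ := g.le_opNorm v
    _ ≤ e * ‖v‖ := by
      gcongr
      exact hg_norm ▸ LinearMap.mkContinuous_norm_le _ he hφY

theorem Real.iInf_mono_of_forall_exists {ι : Sort*} {f g : ι → ℝ} (hf : BddBelow (Set.range f))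
    (h : ∀ i, ∃ j, f j ≤ g i) : ⨅ i, f i ≤ ⨅ i, g i := by
  cases isEmpty_or_nonempty ι
  · simp [Real.iInf_of_isEmpty]
  · exact ciInf_mono_of_forall_exists hf h

theorem bddAbove_range_abs_integral_sub_sum {X ι : Type*} [MeasurableSpace X] (μ : Measure X)
    [IsFiniteMeasure μ] {m : ℕ} (g : ι → X → ℝ) {M : ℝ} (hg : ∀ i x, |g i x| ≤ M)
    (ξ : Fin m → X) (w : Fin m → ℝ) :
    BddAbove (Set.range fun i ↦ |∫ x, g i x ∂μ - ∑ j, w j * g i (ξ j)|) := by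
  refine ⟨M * μ.real Set.univ + ∑ j, |w j| * M, ?_⟩
  rintro _ ⟨i, rfl⟩
  have hint : |∫ x, g i x ∂μ| ≤ M * μ.real Set.univ :=
    norm_integral_le_of_norm_le_const (f := g i) (ae_of_all _ (hg i))
  have hsum : |∑ j, w j * g i (ξ j)| ≤ ∑ j, |w j| * M := by
    refine (abs_sum_le_sum_abs _ _).trans (sum_le_sum fun j _ ↦ ?_)
    rw [abs_mul]
    exact mul_le_mul_of_nonneg_left (hg i (ξ j)) (abs_nonneg _)
  exact (abs_sub _ _).trans (add_le_add hint hsum)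

namespace ContinuousMap

variable {X E : Type*} [TopologicalSpace X] [CompactSpace X] [MeasurableSpace X]
  [OpensMeasurableSpace X] (μ : Measure X) [IsFiniteMeasure μ]
  [NormedAddCommGroup E]

theorem integrable (f : C(X, E)) : Integrable f μ :=
  f.continuous.integrable_of_hasCompactSupport (HasCompactSupport.of_compactSpace _)

variable [NormedSpace ℝ E]

def integralLinearMap : C(X, E) →ₗ[ℝ] E where
  toFun f := ∫ x, f x ∂μ
  map_add' f g := integral_add (f.integrable μ) (g.integrable μ)
  map_smul' c f := integral_smul c f

end ContinuousMap

section UnitBall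

variable {X V : Type*} [TopologicalSpace X] [NormedAddCommGroup V] [NormedSpace ℝ V]

def unitBallImage (T : V →L[ℝ] C(X, ℝ)) : Set (X → ℝ) :=
  {h : X → ℝ | ∃ v : V, ‖v‖ ≤ 1 ∧ h = ⇑(T v)}

variable [CompactSpace X] (T : V →L[ℝ] C(X, ℝ))

theorem abs_le_opNorm_of_mem_unitBallImage {f : X → ℝ} (hf : f ∈ unitBallImage T) (x : X) :
    |f x| ≤ ‖T‖ := by
  obtain ⟨v, hv, rfl⟩ := hf
  calc |T v x| ≤ ‖T v‖ := (T v).norm_coe_le_norm x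
    _ ≤ ‖T‖ * 1 := T.le_opNorm_of_le hv
    _ = ‖T‖ := mul_one _

variable [MeasurableSpace X] [OpensMeasurableSpace X] (μ : Measure X) [IsFiniteMeasure μ]

theorem exists_weights_integration_error_le_L1_error {m : ℕ} (ξ : Fin m → X) (w : Fin m → ℝ) :
    ∃ c : Fin m → ℝ,
      (⨆ f : unitBallImage T, |∫ x, f.1 x ∂μ - ∑ j, c j * f.1 (ξ j)|) ≤
        ⨆ f : unitBallImage T, |∫ x, |f.1 x| ^ 1 ∂μ - ∑ j, w j * |f.1 (ξ j)| ^ 1| := by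
  set e := ⨆ f : unitBallImage T, |∫ x, |f.1 x| ^ 1 ∂μ - ∑ j, w j * |f.1 (ξ j)| ^ 1|
  have he : 0 ≤ e := Real.iSup_nonneg fun _ ↦ abs_nonneg _
  have hbdd := bddAbove_range_abs_integral_sub_sum μ (fun f : unitBallImage T ↦ (|f.1 ·| ^ 1))
    (fun f x ↦ by simpa using abs_le_opNorm_of_mem_unitBallImage T f.2 x) ξ w
  have hker : ∀ v : V, ‖v‖ ≤ 1 → (∀ j, T v (ξ j) = 0) → ‖∫ x, T v x ∂μ‖ ≤ e := by
    intro v hv hvξ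
    calc ‖∫ x, T v x ∂μ‖ ≤ ∫ x, |T v x| ∂μ := norm_integral_le_integral_norm _
      _ = |∫ x, |T v x| ^ 1 ∂μ - ∑ j, w j * |T v (ξ j)| ^ 1| := by
        simp only [hvξ, pow_one, abs_zero, mul_zero, sum_const_zero, sub_zero]
        exact (abs_of_nonneg (integral_nonneg fun x ↦ abs_nonneg _)).symm
      _ ≤ e := le_ciSup hbdd ⟨_, v, hv, rfl⟩
  obtain ⟨c, hc⟩ := exists_norm_sub_sum_mul_le_of_forall_mem_iInf_ker
    ((ContinuousMap.integralLinearMap μ).comp (T : V →ₗ[ℝ] C(X, ℝ)))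
    (fun j ↦ ((ContinuousMap.evalCLM ℝ (ξ j)).comp T : V →ₗ[ℝ] ℝ)) hker
  refine ⟨c, Real.iSup_le (fun ⟨_, v, hv, hf⟩ ↦ ?_) he⟩
  subst hf
  exact (hc v).trans (mul_le_of_le_one_right he hv)

end UnitBall

theorem ermo_L1_ge_kappa_general {d : ℕ} (Ω : Set (Fin d → ℝ)) (hΩ : IsCompact Ω)
    (μ : Measure Ω) [IsProbabilityMeasure μ]
    (V : Type*) [NormedAddCommGroup V] [NormedSpace ℝ V]
    (T : V →L[ℝ] C(Ω, ℝ)) (m : ℕ) :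
    ermoLq μ {h : Ω → ℝ | ∃ v : V, ‖v‖ ≤ 1 ∧ h = ⇑(T v)} 1 m
      ≥ kappam μ {h : Ω → ℝ | ∃ v : V, ‖v‖ ≤ 1 ∧ h = ⇑(T v)} m := by
  have : CompactSpace Ω := isCompact_iff_compactSpace.mp hΩ
  rw [ermoLq, kappam, ge_iff_le]
  refine Real.iInf_mono_of_forall_exists ⟨0, ?_⟩ fun p ↦ ?_
  · rintro _ ⟨p, rfl⟩
    exact Real.iSup_nonneg fun _ ↦ abs_nonneg _
  · obtain ⟨c, hc⟩ := exists_weights_integration_error_le_L1_error T μ p.1 p.2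
    exact ⟨(p.1, c), hc⟩

/-- Let `V` be a Banach space continuously and injectively embedded in
`C(Ω)` (via `T`), and let `W` be the image of its unit ball.  Then
`er_m^o(W, L₁) ≥ κ_m(W)` for every `m`. -/
theorem ermo_L1_ge_kappa {d : ℕ} (Ω : Set (Fin d → ℝ)) (hΩ : IsCompact Ω)
    (μ : Measure Ω) [IsProbabilityMeasure μ]
    (V : Type*) [NormedAddCommGroup V] [NormedSpace ℝ V] [CompleteSpace V]
    (T : V →L[ℝ] C(Ω, ℝ)) (hT : Function.Injective T) (m : ℕ) :
    ermoLq μ {h : Ω → ℝ | ∃ v : V, ‖v‖ ≤ 1 ∧ h = ⇑(T v)} 1 m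
      ≥ kappam μ {h : Ω → ℝ | ∃ v : V, ‖v‖ ≤ 1 ∧ h = ⇑(T v)} m :=
  ermo_L1_ge_kappa_general Ω hΩ μ V T m
end
end

section
/- Let q = 2n with n ∈ ℕ, let Ω be a compact subset of ℝ^d with a probability measure μ, and let W ⊂ C(Ω) be a class of real-valued continuous functions that is symmetric (f ∈ W ⟹ −f ∈ W), convex, contains the constant function 1, and has the quasi-algebra property with constant a. Then there exists a constant c(a,n) > 0 such that for every m ∈ ℕ, er_m^o(W, L_q) ≥ c(a,n) κ_m(W). -/
/-!
Let `E` be the error functional `h ↦ ∫ h dμ − ∑ⱼ λⱼ h(ξʲ)` of a cubature formula, `S = sup_W |E f|`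
and `D = sup_W |E(|f|^q)|`. For `f ∈ W` and `0 < t ≤ 1` the functions `(1 ± t f)/2` lie in `W`, and
the binomial theorem gives
`2^q (E(((1 + t f)/2)^q) − E(((1 − t f)/2)^q)) = 2 q t E(f) + ∑_{k ≥ 3 odd} 2 C(q,k) t^k E(f^k)`.
The quasi-algebra property puts `f^k / a^(k-1)` in `W`, so `|t^k E(f^k)| ≤ t (t a) S`; for `t a`
small the tail is at most `q t S / 2`, whence `q t S ≤ 2^(q+1) D`. Taking the infimum over all
cubature formulas gives the theorem with `c = q t / 2^(q+1)`.
-/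

open MeasureTheory Finset

noncomputable section

def cubatureError {α : Type*} [MeasurableSpace α] (μ : Measure α) {m : ℕ} (ξ : Fin m → α)
    (w : Fin m → ℝ) (h : α → ℝ) : ℝ :=
  (∫ x, h x ∂μ) - ∑ j, w j * h (ξ j)

def IsQuasiAlgebra {α : Type*} (W : Set (α → ℝ)) (a : ℝ) : Prop :=
  ∀ f ∈ W, ∀ g ∈ W, (fun x => f x * g x / a) ∈ W

lemma two_pow_mul_half_add_pow_sub_half_sub_pow (q : ℕ) (y : ℝ) :
    2 ^ q * (((1 + y) / 2) ^ q - ((1 - y) / 2) ^ q) =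
      ∑ k ∈ range (q + 1), (q.choose k * (1 - (-1) ^ k) : ℝ) * y ^ k := by
  rw [mul_sub, ← mul_pow, ← mul_pow, mul_div_cancel₀ _ two_ne_zero,
    mul_div_cancel₀ _ two_ne_zero, add_comm 1 y, sub_eq_neg_add 1 y, add_pow, add_pow,
    ← sum_sub_distrib]
  refine sum_congr rfl fun k _ => ?_
  rw [neg_pow]
  ring

section CubatureError

variable {α : Type*} [MeasurableSpace α] {μ : Measure α} {m : ℕ} {ξ : Fin m → α}
  {w : Fin m → ℝ}

lemma cubatureError_const_mul (c : ℝ) (h : α → ℝ) :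
    cubatureError μ ξ w (fun x => c * h x) = c * cubatureError μ ξ w h := by
  simp only [cubatureError, integral_const_mul, mul_sub, mul_sum, mul_left_comm]

lemma cubatureError_sub {h₁ h₂ : α → ℝ} (h₁i : Integrable h₁ μ) (h₂i : Integrable h₂ μ) :
    cubatureError μ ξ w (fun x => h₁ x - h₂ x) =
      cubatureError μ ξ w h₁ - cubatureError μ ξ w h₂ := by
  simp only [cubatureError, integral_sub h₁i h₂i, mul_sub, sum_sub_distrib]
  ring

lemma cubatureError_finset_sum {ι : Type*} (s : Finset ι) {F : ι → α → ℝ}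
    (hF : ∀ k ∈ s, Integrable (F k) μ) :
    cubatureError μ ξ w (fun x => ∑ k ∈ s, F k x) = ∑ k ∈ s, cubatureError μ ξ w (F k) := by
  simp only [cubatureError, integral_finsetSum s hF, sum_sub_distrib, mul_sum]
  rw [sum_comm]

lemma two_pow_mul_cubatureError_sub [TopologicalSpace α] [CompactSpace α]
    [OpensMeasurableSpace α] [IsFiniteMeasure μ] {g : α → ℝ} (hg : Continuous g) (q : ℕ) :
    2 ^ q * (cubatureError μ ξ w (fun x => ((1 + g x) / 2) ^ q) -
        cubatureError μ ξ w (fun x => ((1 - g x) / 2) ^ q)) =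
      ∑ k ∈ range (q + 1), (q.choose k * (1 - (-1) ^ k) : ℝ) *
        cubatureError μ ξ w (fun x => g x ^ k) := by
  have hint : ∀ h : α → ℝ, Continuous h → Integrable h μ := fun h hc =>
    hc.integrable_of_hasCompactSupport (HasCompactSupport.of_compactSpace h)
  rw [← cubatureError_sub (hint _ (by fun_prop)) (hint _ (by fun_prop)),
    ← cubatureError_const_mul]
  simp_rw [two_pow_mul_half_add_pow_sub_half_sub_pow]
  rw [cubatureError_finset_sum _ fun k _ => hint _ (by fun_prop)]
  simp_rw [cubatureError_const_mul]

end CubatureError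

section QuasiAlgebra

variable {α : Type*} {W : Set (α → ℝ)} {a : ℝ}

lemma Convex.zero_mem_of_forall_neg_mem (hconv : Convex ℝ W)
    (hsym : ∀ f ∈ W, (fun x => -f x) ∈ W) {f : α → ℝ} (hf : f ∈ W) : (fun _ => (0 : ℝ)) ∈ W := by
  convert hconv hf (hsym f hf) (by norm_num : (0 : ℝ) ≤ 1 / 2) (by norm_num : (0 : ℝ) ≤ 1 / 2)
    (by norm_num) using 1
  funext x
  simp only [Pi.add_apply, Pi.smul_apply, smul_eq_mul]
  ring

lemma Convex.half_one_add_mem (hconv : Convex ℝ W) (hone : (fun _ => (1 : ℝ)) ∈ W)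
    {g : α → ℝ} (hg : g ∈ W) : (fun x => (1 + g x) / 2) ∈ W := by
  convert hconv hone hg (by norm_num : (0 : ℝ) ≤ 1 / 2) (by norm_num : (0 : ℝ) ≤ 1 / 2)
    (by norm_num) using 1
  funext x
  simp only [Pi.add_apply, Pi.smul_apply, smul_eq_mul]
  ring

lemma IsQuasiAlgebra.pow_div_mem (hW : IsQuasiAlgebra W a) {f : α → ℝ} (hf : f ∈ W) :
    ∀ k : ℕ, (fun x => f x ^ (k + 1) / a ^ k) ∈ W
  | 0 => by simpa using hf
  | k + 1 => by
    convert hW _ (hW.pow_div_mem hf k) f hf using 2 with x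
    ring

variable [MeasurableSpace α] {μ : Measure α} {m : ℕ} {ξ : Fin m → α} {w : Fin m → ℝ}

lemma IsQuasiAlgebra.abs_cubatureError_pow_le (hW : IsQuasiAlgebra W a) (ha : 0 < a) {S : ℝ}
    (hS : ∀ g ∈ W, |cubatureError μ ξ w g| ≤ S) {f : α → ℝ} (hf : f ∈ W) (k : ℕ) :
    |cubatureError μ ξ w (fun x => f x ^ (k + 1))| ≤ a ^ k * S := by
  have h : (fun x => f x ^ (k + 1)) = fun x => a ^ k * (f x ^ (k + 1) / a ^ k) := by
    funext x
    field_simp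
  rw [h, cubatureError_const_mul, abs_mul, abs_of_pos (pow_pos ha k)]
  exact mul_le_mul_of_nonneg_left (hS _ (hW.pow_div_mem hf k)) (by positivity)

lemma IsQuasiAlgebra.abs_choose_mul_cubatureError_le (hW : IsQuasiAlgebra W a) (ha : 0 < a)
    {S : ℝ} (hS : ∀ g ∈ W, |cubatureError μ ξ w g| ≤ S) {f : α → ℝ} (hf : f ∈ W) {t : ℝ}
    (ht : 0 ≤ t) (hta : t * a ≤ 1) (q : ℕ) {k : ℕ} (hk : k ≠ 1) :
    |(q.choose k * (1 - (-1) ^ k) : ℝ) * cubatureError μ ξ w (fun x => (t * f x) ^ k)| ≤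
      2 * q.choose k * (t * (t * a) * S) := by
  have hS0 : 0 ≤ S := (abs_nonneg _).trans (hS f hf)
  rcases Nat.even_or_odd k with hk' | ⟨r, rfl⟩
  · rw [hk'.neg_one_pow, sub_self, mul_zero, zero_mul, abs_zero]
    positivity
  have hE : |cubatureError μ ξ w (fun x => (t * f x) ^ (2 * r + 1))| ≤ t * (t * a) * S :=
    calc _ = t ^ (2 * r + 1) * |cubatureError μ ξ w (fun x => f x ^ (2 * r + 1))| := by
          simp_rw [mul_pow]
          rw [cubatureError_const_mul, abs_mul, abs_of_nonneg (by positivity)]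
      _ ≤ t ^ (2 * r + 1) * (a ^ (2 * r) * S) := by
          gcongr
          exact hW.abs_cubatureError_pow_le ha hS hf _
      _ = t * (t * a) ^ (2 * r) * S := by ring
      _ ≤ t * (t * a) * S := by
          gcongr
          exact pow_le_of_le_one (by positivity) hta (by omega)
  rw [abs_mul, Odd.neg_one_pow ⟨r, rfl⟩, abs_of_nonneg (by norm_num)]
  nlinarith [Nat.cast_nonneg (α := ℝ) (q.choose (2 * r + 1))]

lemma IsQuasiAlgebra.mul_abs_cubatureError_le [TopologicalSpace α] [CompactSpace α]
    [OpensMeasurableSpace α] [IsFiniteMeasure μ] (hW : IsQuasiAlgebra W a) (ha : 0 < a)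
    (hWc : ∀ f ∈ W, Continuous f) (hsym : ∀ f ∈ W, (fun x => -f x) ∈ W) (hconv : Convex ℝ W)
    (hone : (fun _ => (1 : ℝ)) ∈ W) {q : ℕ} (hq : Even q) (hq0 : q ≠ 0) {S D t : ℝ}
    (hS : ∀ g ∈ W, |cubatureError μ ξ w g| ≤ S)
    (hD : ∀ g ∈ W, |cubatureError μ ξ w (fun x => |g x| ^ q)| ≤ D)
    (ht0 : 0 ≤ t) (ht1 : t ≤ 1) (hta : t * a ≤ 1) {f : α → ℝ} (hf : f ∈ W) :
    q * t * |cubatureError μ ξ w f| ≤ 2 ^ q * D + 2 ^ q * (t * (t * a) * S) := by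
  have hS0 : 0 ≤ S := (abs_nonneg _).trans (hS f hf)
  have htf : (fun x => t * f x) ∈ W :=
    hconv.smul_mem_of_zero_mem (hconv.zero_mem_of_forall_neg_mem hsym hf) hf ⟨ht0, ht1⟩
  set A := cubatureError μ ξ w (fun x => ((1 + t * f x) / 2) ^ q)
  set B := cubatureError μ ξ w (fun x => ((1 - t * f x) / 2) ^ q)
  have hA : |A| ≤ D := by
    simpa only [hq.pow_abs] using hD _ (hconv.half_one_add_mem hone htf)
  have hB : |B| ≤ D := by
    simpa only [hq.pow_abs, ← sub_eq_add_neg] using hD _ (hconv.half_one_add_mem hone (hsym _ htf))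
  have hAB : |2 ^ q * (A - B)| ≤ 2 ^ q * (2 * D) := by
    rw [abs_mul, abs_of_pos (by positivity)]
    gcongr
    linarith [abs_sub A B]
  have hexpand := two_pow_mul_cubatureError_sub (μ := μ) (ξ := ξ) (w := w)
    (g := fun x => t * f x) (continuous_const.mul (hWc f hf)) q
  rw [← add_sum_erase _ _ (mem_range.2 (by omega : 1 < q + 1))] at hexpand
  simp only [pow_one, Nat.choose_one_right, cubatureError_const_mul] at hexpand
  have htail : |∑ k ∈ (range (q + 1)).erase 1, (q.choose k * (1 - (-1) ^ k) : ℝ) *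
      cubatureError μ ξ w (fun x => (t * f x) ^ k)| ≤ 2 ^ q * (2 * (t * (t * a) * S)) :=
    calc _ ≤ ∑ k ∈ (range (q + 1)).erase 1, 2 * q.choose k * (t * (t * a) * S) :=
          (abs_sum_le_sum_abs _ _).trans <| sum_le_sum fun k hk =>
            hW.abs_choose_mul_cubatureError_le ha hS hf ht0 hta q (ne_of_mem_erase hk)
      _ ≤ ∑ k ∈ range (q + 1), 2 * q.choose k * (t * (t * a) * S) :=
          sum_le_sum_of_subset_of_nonneg (erase_subset _ _) fun _ _ _ => by positivity
      _ = 2 ^ q * (2 * (t * (t * a) * S)) := by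
          rw [← sum_mul, ← mul_sum, ← Nat.cast_sum, Nat.sum_range_choose]
          push_cast
          ring
  rw [← abs_of_nonneg (by positivity : (0 : ℝ) ≤ q * t), ← abs_mul, abs_le]
  obtain ⟨hAB₁, hAB₂⟩ := abs_le.mp hAB
  obtain ⟨htail₁, htail₂⟩ := abs_le.mp htail
  constructor <;> linarith

lemma IsQuasiAlgebra.bddAbove_abs_cubatureError_abs_pow (hW : IsQuasiAlgebra W a) (ha : 0 < a)
    {q : ℕ} (hq : Even q) (hq0 : q ≠ 0)
    (h : BddAbove (Set.range fun f : W => |cubatureError μ ξ w f.1|)) :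
    BddAbove (Set.range fun f : W => |cubatureError μ ξ w (fun x => |f.1 x| ^ q)|) := by
  obtain ⟨M, hM⟩ := h
  obtain ⟨j, rfl⟩ := Nat.exists_eq_succ_of_ne_zero hq0
  refine ⟨a ^ j * M, Set.forall_mem_range.2 fun f => ?_⟩
  simp only [hq.pow_abs]
  exact hW.abs_cubatureError_pow_le ha (fun g hg => hM ⟨⟨g, hg⟩, rfl⟩) f.2 j

lemma IsQuasiAlgebra.mul_iSup_abs_cubatureError_le [TopologicalSpace α] [CompactSpace α]
    [OpensMeasurableSpace α] [IsFiniteMeasure μ] (hW : IsQuasiAlgebra W a) (ha : 0 < a)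
    (hWc : ∀ f ∈ W, Continuous f) (hsym : ∀ f ∈ W, (fun x => -f x) ∈ W) (hconv : Convex ℝ W)
    (hone : (fun _ => (1 : ℝ)) ∈ W) {q : ℕ} (hq : Even q) (hq0 : q ≠ 0) {t : ℝ} (ht0 : 0 < t)
    (ht1 : t ≤ 1) (hta : t * a ≤ q / 2 ^ (q + 1))
    (h : BddAbove (Set.range fun f : W => |cubatureError μ ξ w f.1|)) :
    q * t / 2 ^ (q + 1) * ⨆ f : W, |cubatureError μ ξ w f.1| ≤
      ⨆ f : W, |cubatureError μ ξ w (fun x => |f.1 x| ^ q)| := by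
  set S := ⨆ f : W, |cubatureError μ ξ w f.1|
  set D := ⨆ f : W, |cubatureError μ ξ w (fun x => |f.1 x| ^ q)|
  have hS : ∀ g ∈ W, |cubatureError μ ξ w g| ≤ S := fun g hg => le_ciSup h ⟨g, hg⟩
  have hD : ∀ g ∈ W, |cubatureError μ ξ w (fun x => |g x| ^ q)| ≤ D := fun g hg =>
    le_ciSup (hW.bddAbove_abs_cubatureError_abs_pow ha hq hq0 h) ⟨g, hg⟩
  have hS0 : 0 ≤ S := Real.iSup_nonneg fun _ => abs_nonneg _
  have hD0 : 0 ≤ D := Real.iSup_nonneg fun _ => abs_nonneg _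
  have hq2 : (q : ℝ) ≤ 2 ^ (q + 1) := by
    exact_mod_cast (Nat.lt_two_pow_self).le.trans (Nat.pow_le_pow_right two_pos q.le_succ)
  have hta1 : t * a ≤ 1 := hta.trans ((div_le_one (by positivity)).2 hq2)
  have hqt : (0 : ℝ) < q * t := by positivity
  have htail : 2 ^ q * (t * (t * a) * S) ≤ q * t * S / 2 :=
    calc _ ≤ 2 ^ q * (t * (q / 2 ^ (q + 1)) * S) := by gcongr
      _ = q * t * S / 2 := by
          rw [pow_succ]
          field_simp
  have hbound : ∀ f : W, |cubatureError μ ξ w f.1| ≤ (2 ^ q * D + q * t * S / 2) / (q * t) :=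
    fun f => by
      rw [le_div_iff₀ hqt, mul_comm]
      exact (hW.mul_abs_cubatureError_le ha hWc hsym hconv hone hq hq0 hS hD ht0.le ht1 hta1
        f.2).trans (by linarith)
  have hSD := (le_div_iff₀ hqt).1 (Real.iSup_le hbound (by positivity))
  rw [div_mul_eq_mul_div, div_le_iff₀ (by positivity), pow_succ]
  linarith

end QuasiAlgebra

/-- Let `q = 2n`, `n ≥ 1`, and let `W ⊂ C(Ω)` be a symmetric convex
class of real continuous functions containing the constant `1` and having the quasi-algebra
property with constant `a > 0`.  Then there is `c(a,n) > 0` with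
`er_m^o(W, L_q) ≥ c(a,n) κ_m(W)` for every `m`. -/
theorem ermo_Lq_ge_kappa_even {d : ℕ} (Ω : Set (Fin d → ℝ)) (hΩ : IsCompact Ω)
    (μ : Measure Ω) [IsProbabilityMeasure μ]
    (W : Set (Ω → ℝ)) (hWc : ∀ f ∈ W, Continuous f)
    (n : ℕ) (hn : 1 ≤ n) (a : ℝ) (ha : 0 < a)
    (hsym : ∀ f ∈ W, (fun x => -f x) ∈ W)
    (hconv : Convex ℝ W)
    (hone : (fun _ => (1 : ℝ)) ∈ W)
    (hqa : ∀ f ∈ W, ∀ g ∈ W, (fun x => f x * g x / a) ∈ W) :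
    ∃ c : ℝ, 0 < c ∧ ∀ m : ℕ, ermoLq μ W (2 * n) m ≥ c * kappam μ W m := by
  have : CompactSpace Ω := isCompact_iff_compactSpace.mp hΩ
  have : Nonempty Ω := nonempty_of_isProbabilityMeasure μ
  have hq : Even (2 * n) := even_two_mul n
  have hq0 : 2 * n ≠ 0 := by omega
  set q := 2 * n
  set t : ℝ := min 1 (q / (2 ^ (q + 1) * a))
  have ht0 : 0 < t := lt_min one_pos (by positivity)
  have hta : t * a ≤ q / 2 ^ (q + 1) := by
    rw [← le_div_iff₀ ha, div_div]
    exact min_le_right _ _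
  refine ⟨q * t / 2 ^ (q + 1), by positivity, fun m => le_ciInf fun p => ?_⟩
  have hκ : kappam μ W m ≤ ⨆ f : W, |cubatureError μ p.1 p.2 f.1| :=
    ciInf_le ⟨0, Set.forall_mem_range.2 fun _ => Real.iSup_nonneg fun _ => abs_nonneg _⟩ p
  by_cases hbdd : BddAbove (Set.range fun f : W => |cubatureError μ p.1 p.2 f.1|)
  · exact (mul_le_mul_of_nonneg_left hκ (by positivity)).trans
      (IsQuasiAlgebra.mul_iSup_abs_cubatureError_le hqa ha hWc hsym hconv hone hq hq0 ht0
        (min_le_left _ _) hta hbdd)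
  -- an unbounded `⨆` is `0` in `ℝ`, so then `κ_m(W) ≤ 0`
  · rw [Real.iSup_of_not_bddAbove hbdd] at hκ
    exact (mul_nonpos_of_nonneg_of_nonpos (by positivity) hκ).trans
      (Real.iSup_nonneg fun _ => abs_nonneg _)
end
end
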